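/- For any connected graph G and any n ≥ 2, pd(G × K_n) ≤ pd(G) + n − 1, where K_n is the complete graph on n vertices. -/

import Mathlib

open SimpleGraph

/-- Distance from a vertex to a set of vertices: `min {d(v,x) : x ∈ P}`. -/
noncomputable def distToSet {V : Type*} (G : SimpleGraph V) (v : V) (P : Set V) : ℕ :=
  sInf ((G.dist v) '' P)

/-- `S` is a resolving set of `G`. -/
def IsResolvingSet {V : Type*} (G : SimpleGraph V) (S : Set V) : Prop :=
  ∀ u v : V, u ≠ v → ∃ w ∈ S, G.dist u w ≠ G.dist v w

/-- The metric dimension of `G`. -/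
noncomputable def metricDim {V : Type*} (G : SimpleGraph V) : ℕ :=
  sInf {n | ∃ S : Finset V, S.card = n ∧ IsResolvingSet G ↑S}

/-- `Π` is a resolving partition of `G`: a partition of the vertex set such that
distinct vertices have distinct vectors of distances to the parts. -/
def IsResolvingPartition {V : Type*} (G : SimpleGraph V) (Pi : Set (Set V)) : Prop :=
  Setoid.IsPartition Pi ∧
    ∀ u v : V, u ≠ v → ∃ P ∈ Pi, distToSet G u P ≠ distToSet G v P

/-- The partition dimension of `G`. -/
noncomputable def partitionDim {V : Type*} (G : SimpleGraph V) : ℕ :=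
  sInf {n | ∃ Pi : Finset (Set V), Pi.card = n ∧ IsResolvingPartition G ↑Pi}

/-!
Let `Π` be a resolving partition of `G`. Distances in `G □ H` add up coordinatewise, so cutting
the layer `α × {z}` along `Π` and keeping every other layer `α × {j}` whole gives a resolving
partition with `|Π| + |H| - 1` parts: two vertices of one layer are separated by a piece
`P × {z}`, at distance `d(u, P) + d_H(a, z)`, and vertices of different layers `a ≠ b` by
whichever of the whole layers `α × {a}`, `α × {b}` is not the cut one.
-/

namespace SimpleGraph

variable {α β : Type*} {G : SimpleGraph α} {H : SimpleGraph β}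

lemma dist_boxProd_of_reachable {x y : α × β} (h₁ : G.Reachable x.1 y.1)
    (h₂ : H.Reachable x.2 y.2) :
    (G □ H).dist x y = G.dist x.1 y.1 + H.dist x.2 y.2 := by
  have h := (reachable_boxProd.2 ⟨h₁, h₂⟩ : (G □ H).Reachable x y).coe_dist_eq_edist
  rw [edist_boxProd, ← h₁.coe_dist_eq_edist, ← h₂.coe_dist_eq_edist] at h
  exact_mod_cast h

end SimpleGraph

section distToSet

variable {α β : Type*} {G : SimpleGraph α} {H : SimpleGraph β}

lemma distToSet_eq_zero_of_mem {v : α} {P : Set α} (hv : v ∈ P) : distToSet G v P = 0 :=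
  Nat.eq_zero_of_le_zero (Nat.sInf_le ⟨v, hv, SimpleGraph.dist_self⟩)

lemma distToSet_boxProd_prod_singleton (hG : G.Connected) (hH : H.Connected) (x : α × β)
    {P : Set α} (hP : P.Nonempty) (b : β) :
    distToSet (G □ H) x (P ×ˢ {b}) = distToSet G x.1 P + H.dist x.2 b := by
  have hdist : (G □ H).dist x '' (P ×ˢ {b}) = (· + H.dist x.2 b) '' (G.dist x.1 '' P) := by
    rw [Set.prod_singleton, Set.image_image, Set.image_image]
    exact Set.image_congr fun v _ =>
      SimpleGraph.dist_boxProd_of_reachable (hG.preconnected _ _) (hH.preconnected _ _)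
  rw [distToSet, distToSet, hdist]
  exact ((add_left_mono (a := H.dist x.2 b)).map_csInf_of_continuousAt
    continuous_of_discreteTopology.continuousAt (hP.image _) (OrderBot.bddBelow _)).symm

lemma distToSet_boxProd_layer (hG : G.Connected) (hH : H.Connected) (x : α × β) (b : β) :
    distToSet (G □ H) x (Set.univ ×ˢ {b}) = H.dist x.2 b := by
  rw [distToSet_boxProd_prod_singleton hG hH x ⟨x.1, Set.mem_univ _⟩,
    distToSet_eq_zero_of_mem (Set.mem_univ _), zero_add]

end distToSet

section partitionDim

variable {α : Type*} {G : SimpleGraph α}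

lemma partitionDim_le_card {Pi : Finset (Set α)} (hPi : IsResolvingPartition G Pi) :
    partitionDim G ≤ Pi.card :=
  Nat.sInf_le ⟨Pi, rfl, hPi⟩

lemma isResolvingPartition_singletons (hG : G.Connected) :
    IsResolvingPartition G (Set.range fun v : α => {v}) := by
  refine ⟨⟨fun ⟨v, hv⟩ => Set.singleton_ne_empty v hv, fun v => ⟨{v}, ⟨⟨v, rfl⟩, rfl⟩, ?_⟩⟩, ?_⟩
  · rintro _ ⟨⟨w, rfl⟩, hv⟩
    rw [Set.mem_singleton_iff.1 hv]
  · intro u v huv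
    refine ⟨{u}, ⟨u, rfl⟩, ?_⟩
    simpa [distToSet, eq_comm (a := 0), hG.dist_eq_zero_iff] using huv.symm

lemma exists_isResolvingPartition_card_eq [Finite α] (hG : G.Connected) :
    ∃ Pi : Finset (Set α), Pi.card = partitionDim G ∧ IsResolvingPartition G Pi := by
  have : Fintype α := Fintype.ofFinite α
  have hne : Set.Nonempty {n | ∃ Pi : Finset (Set α), Pi.card = n ∧ IsResolvingPartition G Pi} :=
    ⟨_, (Set.range fun v : α => {v}).toFinset, rfl, by
      simpa using isResolvingPartition_singletons hG⟩
  exact Nat.sInf_mem hne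

end partitionDim

section layerPartition

variable {α β : Type*} [Fintype β]

open Classical in
noncomputable def layerPartition (Pi : Finset (Set α)) (z : β) : Finset (Set (α × β)) :=
  Pi.image (· ×ˢ {z}) ∪ (Finset.univ.erase z).image fun j => Set.univ ×ˢ {j}

lemma mem_layerPartition {Pi : Finset (Set α)} {z : β} {S : Set (α × β)} :
    S ∈ layerPartition Pi z ↔ (∃ P ∈ Pi, P ×ˢ {z} = S) ∨ ∃ j ≠ z, Set.univ ×ˢ {j} = S := by
  simp [layerPartition]

lemma card_layerPartition_le (Pi : Finset (Set α)) (z : β) :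
    (layerPartition Pi z).card ≤ Pi.card + (Fintype.card β - 1) := by
  classical
  calc (layerPartition Pi z).card
      ≤ (Pi.image (· ×ˢ {z})).card + ((Finset.univ.erase z).image fun j => Set.univ ×ˢ {j}).card :=
        Finset.card_union_le _ _
    _ ≤ Pi.card + (Finset.univ.erase z).card :=
        add_le_add Finset.card_image_le Finset.card_image_le
    _ = Pi.card + (Fintype.card β - 1) := by
        rw [Finset.card_erase_of_mem (Finset.mem_univ z), Finset.card_univ]

lemma isPartition_layerPartition [Nonempty α] {Pi : Finset (Set α)}
    (hPi : Setoid.IsPartition (Pi : Set (Set α))) (z : β) :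
    Setoid.IsPartition (layerPartition Pi z : Set (Set (α × β))) := by
  refine ⟨fun h => ?_, fun ⟨u, a⟩ => ?_⟩
  · rcases mem_layerPartition.1 h with ⟨P, hP, hPz⟩ | ⟨j, -, hj⟩
    · exact (Setoid.nonempty_of_mem_partition hPi hP).ne_empty (by simpa using hPz)
    · simp at hj
  by_cases ha : a = z
  · subst ha
    obtain ⟨P, ⟨hP, huP⟩, hPuniq⟩ := hPi.2 u
    refine ⟨P ×ˢ {a}, ⟨mem_layerPartition.2 (.inl ⟨P, hP, rfl⟩), by simpa⟩, ?_⟩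
    rintro S ⟨hS, haS⟩
    rcases mem_layerPartition.1 hS with ⟨Q, hQ, rfl⟩ | ⟨j, hj, rfl⟩
    · rw [hPuniq Q ⟨hQ, haS.1⟩]
    · exact absurd haS.2.symm hj
  · refine ⟨Set.univ ×ˢ {a}, ⟨mem_layerPartition.2 (.inr ⟨a, ha, rfl⟩), by simp⟩, ?_⟩
    rintro S ⟨hS, haS⟩
    rcases mem_layerPartition.1 hS with ⟨Q, -, rfl⟩ | ⟨j, -, rfl⟩
    · exact absurd haS.2 ha
    · rw [show a = j from haS.2]

end layerPartition

section boxProd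

variable {α β : Type*} {G : SimpleGraph α} {H : SimpleGraph β}

lemma isResolvingPartition_layerPartition [Fintype β] (hG : G.Connected) (hH : H.Connected)
    {Pi : Finset (Set α)} (hPi : IsResolvingPartition G Pi) (z : β) :
    IsResolvingPartition (G □ H) (layerPartition Pi z) := by
  have : Nonempty α := hG.nonempty
  refine ⟨isPartition_layerPartition hPi.1 z, ?_⟩
  rintro ⟨u, a⟩ ⟨v, b⟩ hne
  by_cases hab : a = b
  · subst hab
    obtain ⟨P, hP, hPuv⟩ := hPi.2 u v fun h => hne (by rw [h])
    have hPne := Setoid.nonempty_of_mem_partition hPi.1 hP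
    refine ⟨P ×ˢ {z}, mem_layerPartition.2 (.inl ⟨P, hP, rfl⟩), ?_⟩
    simpa [distToSet_boxProd_prod_singleton hG hH _ hPne] using hPuv
  by_cases ha : a = z
  · refine ⟨Set.univ ×ˢ {b}, mem_layerPartition.2 (.inr ⟨b, ha ▸ Ne.symm hab, rfl⟩), ?_⟩
    simpa [distToSet_boxProd_layer hG hH] using (hH.pos_dist_of_ne hab).ne'
  · refine ⟨Set.univ ×ˢ {a}, mem_layerPartition.2 (.inr ⟨a, ha, rfl⟩), ?_⟩
    simpa [distToSet_boxProd_layer hG hH] using (hH.pos_dist_of_ne (Ne.symm hab)).ne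

lemma partitionDim_boxProd_le [Finite α] [Fintype β] (hG : G.Connected) (hH : H.Connected) :
    partitionDim (G □ H) ≤ partitionDim G + (Fintype.card β - 1) := by
  obtain ⟨z⟩ := hH.nonempty
  obtain ⟨Pi, hcard, hPi⟩ := exists_isResolvingPartition_card_eq hG
  calc partitionDim (G □ H) ≤ (layerPartition Pi z).card :=
        partitionDim_le_card (isResolvingPartition_layerPartition hG hH hPi z)
    _ ≤ Pi.card + (Fintype.card β - 1) := card_layerPartition_le Pi z
    _ = partitionDim G + (Fintype.card β - 1) := by rw [hcard]

end boxProd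

theorem stmt_8 {V : Type*} [Fintype V] (G : SimpleGraph V) (hG : G.Connected)
    (n : ℕ) (hn : 2 ≤ n) :
    partitionDim (G.boxProd (⊤ : SimpleGraph (Fin n))) ≤ partitionDim G + (n - 1) := by
  have : Nonempty (Fin n) := ⟨⟨0, by omega⟩⟩
  simpa using partitionDim_boxProd_le hG (connected_top (V := Fin n))
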